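/- Let θ₀, θ_R, θ₀', θ_R' ∈ S_{2π} and z ∈ ℂ \ (σ(H_{θ₀,θ_R}) ∪ σ(H_{θ₀',θ_R'})). Then the 2×2 matrix Λ_{θ₀,θ_R}^{θ₀',θ_R'}(z) is invertible and its inverse is Λ_{θ₀',θ_R'}^{θ₀,θ_R}(z). -/

import Mathlib

open MeasureTheory Set Complex Filter Matrix
open scoped Classical

noncomputable section

/-- The strip `S_{2π} = {z ∈ ℂ | 0 ≤ Re z < 2π}`. -/
def S2pi : Set ℂ := {z : ℂ | 0 ≤ z.re ∧ z.re < 2 * Real.pi}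

/-- `u` (with derivative `u'`) solves the inhomogeneous Schrödinger equation
`-u'' + V u - z u = f` on `[0,R]`: `u` is differentiable with derivative `u'`
on `[0,R]`, and `u'` is absolutely continuous with `u'' = (V - z) u - f` (a.e.),
encoded in integrated form. -/
def IsSolInhom (R : ℝ) (V : ℝ → ℂ) (z : ℂ) (f u u' : ℝ → ℂ) : Prop :=
  (∀ x ∈ Icc (0:ℝ) R, HasDerivAt u (u' x) x) ∧
  (∀ x ∈ Icc (0:ℝ) R, u' x = u' 0 + ∫ t in (0:ℝ)..x, ((V t - z) * u t - f t))

/-- `u` (with derivative `u'`) solves the homogeneous equation `-u'' + V u = z u`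
on `[0,R]`. -/
def IsSol (R : ℝ) (V : ℝ → ℂ) (z : ℂ) (u u' : ℝ → ℂ) : Prop :=
  IsSolInhom R V z 0 u u'

/-- The boundary trace map `γ_{θ₀,θ_R}(u) ∈ ℂ²`. -/
def bTrace (R : ℝ) (θ0 θR : ℂ) (u u' : ℝ → ℂ) : Fin 2 → ℂ :=
  ![Complex.cos θ0 * u 0 + Complex.sin θ0 * u' 0,
    Complex.cos θR * u R - Complex.sin θR * u' R]

/-- `z` is an eigenvalue of the Schrödinger operator `H_{θ₀,θ_R}` in `L²((0,R))`.
Since `H_{θ₀,θ_R}` has purely discrete spectrum, the spectrum `σ(H_{θ₀,θ_R})`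
coincides with the set of its eigenvalues. -/
def IsEigenvalue (R : ℝ) (V : ℝ → ℂ) (θ0 θR z : ℂ) : Prop :=
  ∃ u u' : ℝ → ℂ, IsSol R V z u u' ∧ bTrace R θ0 θR u u' = 0 ∧
    ∃ x ∈ Icc (0:ℝ) R, u x ≠ 0

/-- The boundary data map `Λ_{θ₀,θ_R}^{θ₀',θ_R'}(z) : ℂ² → ℂ²`: it sends the
`(θ₀,θ_R)`-boundary data of a solution of `-u'' + V u = z u` to its
`(θ₀',θ_R')`-boundary data.  (It is defined via a choice of solution; for
`z ∉ σ(H_{θ₀,θ_R})` the solution exists and is unique, so the map is well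
defined there.) -/
def lambdaMap (R : ℝ) (V : ℝ → ℂ) (θ0 θR θ0' θR' z : ℂ) (c : Fin 2 → ℂ) :
    Fin 2 → ℂ :=
  if h : ∃ u : (ℝ → ℂ) × (ℝ → ℂ), IsSol R V z u.1 u.2 ∧ bTrace R θ0 θR u.1 u.2 = c then
    bTrace R θ0' θR' h.choose.1 h.choose.2
  else 0

/-- The boundary data map `Λ_{θ₀,θ_R}^{θ₀',θ_R'}(z)` as a `2 × 2` complex matrix. -/
def lambdaMat (R : ℝ) (V : ℝ → ℂ) (θ0 θR θ0' θR' z : ℂ) :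
    Matrix (Fin 2) (Fin 2) ℂ :=
  Matrix.of fun i j => lambdaMap R V θ0 θR θ0' θR' z (Pi.single j 1) i

/-- The diagonal matrix `S_{α,β} = diag(sin α, sin β)`. -/
def Smat (α β : ℂ) : Matrix (Fin 2) (Fin 2) ℂ :=
  Matrix.diagonal ![Complex.sin α, Complex.sin β]

end

/-!
For `z ∉ σ(H_{θ₀,θ_R})` a solution of `-u'' + V u = z u` whose `(θ₀,θ_R)`-trace vanishes is
identically zero, so the `(θ₀,θ_R)`-trace of a solution determines `u(0), u'(0), u(R), u'(R)`
and hence all of its traces. The initial value problem is solvable (a Volterra fixed point, which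
needs an exponentially weighted sup norm because `V` is only integrable); on the span of a
fundamental system the trace map is therefore injective, hence onto `ℂ²`. Thus
`Λ_{θ₀,θ_R}^{θ₀',θ_R'}(z)` is the linear map sending the `(θ₀,θ_R)`-trace of a solution to its
`(θ₀',θ_R')`-trace, and composing it with `Λ_{θ₀',θ_R'}^{θ₀,θ_R}(z)` in either order gives the
identity.
-/

open scoped NNReal

theorem LipschitzOnWith.comp_absolutelyContinuousOnInterval {X Y : Type*} [PseudoMetricSpace X]
    [PseudoMetricSpace Y] {g : X → Y} {K : ℝ≥0} {s : Set X} {f : ℝ → X} {a b : ℝ}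
    (hg : LipschitzOnWith K g s) (hf : AbsolutelyContinuousOnInterval f a b)
    (hfs : MapsTo f (uIcc a b) s) : AbsolutelyContinuousOnInterval (g ∘ f) a b := by
  rw [absolutelyContinuousOnInterval_iff] at hf ⊢
  intro ε hε
  obtain ⟨δ, hδ, hfδ⟩ := hf (ε / (K + 1)) (by positivity)
  refine ⟨δ, hδ, fun I hI hIδ => ?_⟩
  calc ∑ i ∈ Finset.range I.1, dist (g (f (I.2 i).1)) (g (f (I.2 i).2))
      ≤ ∑ i ∈ Finset.range I.1, K * dist (f (I.2 i).1) (f (I.2 i).2) :=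
        Finset.sum_le_sum fun i hi =>
          hg.dist_le_mul _ (hfs (hI.1 i hi).1) _ (hfs (hI.1 i hi).2)
    _ = K * ∑ i ∈ Finset.range I.1, dist (f (I.2 i).1) (f (I.2 i).2) := (Finset.mul_sum ..).symm
    _ ≤ K * (ε / (K + 1)) := by gcongr; exact (hfδ I hI hIδ).le
    _ < ε := by rw [mul_div_assoc', div_lt_iff₀ (by positivity)]; nlinarith

theorem integral_mul_exp_integral {w : ℝ → ℝ} {a b : ℝ} (hw : IntervalIntegrable w volume a b) :
    ∫ t in a..b, w t * Real.exp (∫ s in a..t, w s) = Real.exp (∫ s in a..b, w s) - 1 := by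
  set m : ℝ → ℝ := fun x => ∫ s in a..x, w s
  have hm : AbsolutelyContinuousOnInterval m a b :=
    hw.absolutelyContinuousOnInterval_intervalIntegral left_mem_uIcc
  obtain ⟨C, hC⟩ := hm.exists_bound
  obtain ⟨K, hK⟩ := (Real.contDiff_exp.contDiffOn (s := Icc (-C) C)).exists_lipschitzOnWith
    one_ne_zero (convex_Icc _ _) isCompact_Icc
  have hexp : AbsolutelyContinuousOnInterval (Real.exp ∘ m) a b :=
    hK.comp_absolutelyContinuousOnInterval hm fun x hx => abs_le.1 (hC x hx)
  calc ∫ t in a..b, w t * Real.exp (m t) = ∫ t in a..b, deriv (Real.exp ∘ m) t := by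
        refine intervalIntegral.integral_congr_ae ?_
        filter_upwards [hw.ae_hasDerivAt_integral] with t ht htI
        exact (mul_comm _ _).trans ((ht (uIoc_subset_uIcc htI) a left_mem_uIcc).exp).deriv.symm
    _ = Real.exp (m b) - 1 := by
        rw [hexp.integral_deriv_eq_sub]
        simp [m]

section Volterra

variable {E : Type*} [NormedAddCommGroup E] [NormedSpace ℝ E]
  {F : ℝ → E → E} {w : ℝ → ℝ} {R : ℝ}

theorem continuous_primitive_Icc {G : ℝ → E} (hR : 0 ≤ R) (hG : IntegrableOn G (Icc 0 R)) :
    Continuous fun p : Icc 0 R => ∫ t in 0..(p : ℝ), G t := by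
  rw [← uIcc_of_le hR] at hG ⊢
  exact (intervalIntegral.continuousOn_primitive_interval hG).domRestrict

-- Bielecki's estimate: for the weight `ρ t = exp (∫₀ᵗ 2|w|)`, which satisfies
-- `∫₀ˣ 2|w| ρ = ρ x - 1`, the map `f ↦ ∫₀ˣ F t (f t)` is `1/2`-Lipschitz in the norm `sup ‖f‖ / ρ`.
theorem two_mul_norm_integral_sub_le (hw : IntegrableOn w (Icc 0 R))
    (hF : ∀ t ∈ Icc 0 R, ∀ y y', ‖F t y - F t y'‖ ≤ w t * ‖y - y'‖) {f g : ℝ → E}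
    (hf : IntegrableOn (fun t => F t (f t)) (Icc 0 R))
    (hg : IntegrableOn (fun t => F t (g t)) (Icc 0 R)) {D : ℝ}
    (hfg : ∀ t ∈ Icc 0 R, ‖f t - g t‖ ≤ D * Real.exp (∫ s in 0..t, 2 * |w s|))
    {x : ℝ} (hx : x ∈ Icc 0 R) :
    2 * ‖(∫ t in 0..x, F t (f t)) - ∫ t in 0..x, F t (g t)‖
      ≤ D * (Real.exp (∫ s in 0..x, 2 * |w s|) - 1) := by
  set ρ : ℝ → ℝ := fun t => Real.exp (∫ s in 0..t, 2 * |w s|)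
  have hsub : uIcc 0 x ⊆ Icc 0 R := uIcc_subset_Icc (left_mem_Icc.2 (hx.1.trans hx.2)) hx
  have hw' : IntegrableOn (fun t => 2 * |w t|) (uIcc 0 x) :=
    (hw.mono_set hsub).abs.const_mul 2
  have hρ : ContinuousOn ρ (uIcc 0 x) :=
    Real.continuous_exp.comp_continuousOn (intervalIntegral.continuousOn_primitive_interval hw')
  have hbound : IntervalIntegrable (fun t => D / 2 * (2 * |w t| * ρ t)) volume 0 x :=
    ((IntegrableOn.intervalIntegrable hw').mul_continuousOn hρ).const_mul _
  calc 2 * ‖(∫ t in 0..x, F t (f t)) - ∫ t in 0..x, F t (g t)‖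
      = 2 * ‖∫ t in 0..x, (F t (f t) - F t (g t))‖ := by
        rw [← intervalIntegral.integral_sub (IntegrableOn.intervalIntegrable (hf.mono_set hsub))
          (IntegrableOn.intervalIntegrable (hg.mono_set hsub))]
    _ ≤ 2 * ∫ t in 0..x, D / 2 * (2 * |w t| * ρ t) := by
        gcongr
        refine intervalIntegral.norm_integral_le_of_norm_le hx.1 (ae_of_all _ fun t ht => ?_) hbound
        have ht' : t ∈ Icc 0 R := ⟨ht.1.le, ht.2.trans hx.2⟩
        calc ‖F t (f t) - F t (g t)‖ ≤ w t * ‖f t - g t‖ := hF t ht' _ _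
          _ ≤ |w t| * (D * ρ t) := by gcongr; exacts [le_abs_self _, hfg t ht']
          _ = D / 2 * (2 * |w t| * ρ t) := by ring
    _ = D * (ρ x - 1) := by
        rw [intervalIntegral.integral_const_mul, integral_mul_exp_integral hw'.intervalIntegrable]
        ring

theorem exists_continuous_eq_add_integral [CompleteSpace E] (hR : 0 ≤ R)
    (hw : IntegrableOn w (Icc 0 R))
    (hF : ∀ t ∈ Icc 0 R, ∀ y y', ‖F t y - F t y'‖ ≤ w t * ‖y - y'‖)
    (hFi : ∀ y : ℝ → E, Continuous y → IntegrableOn (fun t => F t (y t)) (Icc 0 R)) (y₀ : E) :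
    ∃ y : ℝ → E, Continuous y ∧ ∀ x ∈ Icc 0 R, y x = y₀ + ∫ t in 0..x, F t (y t) := by
  set ρ : ℝ → ℝ := fun t => Real.exp (∫ s in 0..t, 2 * |w s|)
  have hρ : Continuous fun p : Icc 0 R => ρ p :=
    Real.continuous_exp.comp (continuous_primitive_Icc hR (hw.abs.const_mul 2))
  -- a point `v` of the weighted space stands for `ρ • v`, extended constantly outside `[0, R]`
  set ext : C(Icc 0 R, E) → ℝ → E := fun v => IccExtend hR fun p => ρ p • v p
  have hext : ∀ v, Continuous (ext v) := fun v => (hρ.smul v.continuous).Icc_extend'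
  have hext_mem : ∀ v, ∀ t (ht : t ∈ Icc 0 R), ext v t = ρ t • v ⟨t, ht⟩ := fun v t ht =>
    IccExtend_of_mem hR _ ht
  set Φ : C(Icc 0 R, E) → C(Icc 0 R, E) := fun v =>
    ⟨fun p => (ρ p)⁻¹ • (y₀ + ∫ t in 0..(p : ℝ), F t (ext v t)),
      (hρ.inv₀ fun p => (Real.exp_pos _).ne').smul
        (continuous_const.add (continuous_primitive_Icc hR (hFi _ (hext v))))⟩
  have hΦ : ContractingWith 2⁻¹ Φ := by
    refine ⟨by norm_num, LipschitzWith.of_dist_le_mul fun v v' => ?_⟩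
    refine (ContinuousMap.dist_le (by positivity)).2 fun p => ?_
    have hρp : 0 < ρ p := Real.exp_pos _
    have hvv' : ∀ t ∈ Icc 0 R, ‖ext v t - ext v' t‖ ≤ dist v v' * ρ t := fun t ht => by
      rw [hext_mem v t ht, hext_mem v' t ht, ← smul_sub, norm_smul,
        Real.norm_of_nonneg (Real.exp_pos _).le, mul_comm, ← dist_eq_norm]
      gcongr
      exact ContinuousMap.dist_apply_le_dist _
    have key := two_mul_norm_integral_sub_le hw hF (hFi _ (hext v)) (hFi _ (hext v')) hvv' p.2
    calc dist (Φ v p) (Φ v' p)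
        = (ρ p)⁻¹ * ‖(∫ t in 0..(p : ℝ), F t (ext v t)) - ∫ t in 0..(p : ℝ), F t (ext v' t)‖ := by
          simp [Φ, dist_eq_norm, ← smul_sub, norm_smul, hρp.le]
      _ ≤ (ρ p)⁻¹ * (dist v v' * (ρ p - 1) / 2) := by gcongr; linarith
      _ ≤ ((2⁻¹ : ℝ≥0) : ℝ) * dist v v' := by
          rw [NNReal.coe_inv, NNReal.coe_ofNat, ← sub_nonneg]
          field_simp
          nlinarith [dist_nonneg (x := v) (y := v')]
  obtain ⟨q, hq⟩ : ∃ q, Φ q = q := ⟨_, hΦ.fixedPoint_isFixedPt⟩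
  refine ⟨ext q, hext q, fun x hx => ?_⟩
  have hqx : q ⟨x, hx⟩ = (ρ x)⁻¹ • (y₀ + ∫ t in 0..x, F t (ext q t)) := by
    conv_lhs => rw [← hq]
    rfl
  rw [hext_mem q x hx, hqx, smul_inv_smul₀ (Real.exp_pos _).ne']

end Volterra

section Solutions

variable {R : ℝ} {V : ℝ → ℂ} {z : ℂ}

theorem integrableOn_Icc_sub_const (hV : IntegrableOn V (Ioo 0 R)) (z : ℂ) :
    IntegrableOn (fun t => V t - z) (Icc 0 R) :=
  (hV.sub (integrableOn_const measure_Ioo_lt_top.ne)).congr_set_ae Ioo_ae_eq_Icc.symm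

theorem norm_companion_sub_le (c : ℂ) (p q : ℂ × ℂ) :
    ‖((p.2, c * p.1) - (q.2, c * q.1) : ℂ × ℂ)‖ ≤ (1 + ‖c‖) * ‖p - q‖ :=
  norm_prod_le_iff.2
    ⟨(norm_snd_le (p - q)).trans (le_mul_of_one_le_left (norm_nonneg _) (by simp)), by
      change ‖c * p.1 - c * q.1‖ ≤ _
      rw [← mul_sub, norm_mul]
      exact mul_le_mul (by simp) (norm_fst_le (p - q)) (norm_nonneg _) (by positivity)⟩

theorem exists_isSol (hR : 0 < R) (hV : IntegrableOn V (Ioo 0 R)) (a b : ℂ) :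
    ∃ u u' : ℝ → ℂ, IsSol R V z u u' ∧ u 0 = a ∧ u' 0 = b := by
  have hVz := integrableOn_Icc_sub_const hV z
  have hint : ∀ y : ℝ → ℂ × ℂ, Continuous y →
      IntegrableOn (fun t => ((y t).2, (V t - z) * (y t).1)) (Icc 0 R) := fun y hy =>
    (hy.snd.continuousOn.integrableOn_compact isCompact_Icc).prodMk
      (hVz.mul_continuousOn hy.fst.continuousOn isCompact_Icc)
  -- the first-order system `(u, u')' = (u', (V - z) u)`
  obtain ⟨y, hy, hyeq⟩ := exists_continuous_eq_add_integral hR.le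
    (integrableOn_const measure_Icc_lt_top.ne |>.add hVz.norm)
    (fun t _ => norm_companion_sub_le (V t - z)) hint (a, b)
  have hyint : ∀ x ∈ Icc 0 R,
      IntervalIntegrable (fun t => ((y t).2, (V t - z) * (y t).1)) volume 0 x := fun x hx =>
    IntegrableOn.intervalIntegrable <|
      (hint y hy).mono_set (uIcc_subset_Icc (left_mem_Icc.2 (hx.1.trans hx.2)) hx)
  have hfst : ∀ x ∈ Icc 0 R, (y x).1 = a + ∫ t in 0..x, (y t).2 := fun x hx => by
    rw [hyeq x hx]
    exact congrArg (a + ·)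
      ((ContinuousLinearMap.fst ℝ ℂ ℂ).intervalIntegral_comp_comm (hyint x hx)).symm
  have hsnd : ∀ x ∈ Icc 0 R, (y x).2 = b + ∫ t in 0..x, (V t - z) * (y t).1 := fun x hx => by
    rw [hyeq x hx]
    exact congrArg (b + ·)
      ((ContinuousLinearMap.snd ℝ ℂ ℂ).intervalIntegral_comp_comm (hyint x hx)).symm
  -- `u` is rebuilt from `u'` rather than taken as `(y ·).1`, so that it is differentiable on all
  -- of `ℝ`, including at the endpoints `0` and `R`
  refine ⟨fun x => a + ∫ t in 0..x, (y t).2, fun x => (y x).2,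
    ⟨fun x _ => ((hy.snd.integral_hasStrictDerivAt 0 x).hasDerivAt).const_add a, fun x hx => ?_⟩,
    by simp, by simpa using hsnd 0 ⟨le_rfl, hR.le⟩⟩
  beta_reduce
  rw [hsnd x hx, hsnd 0 ⟨le_rfl, hR.le⟩, intervalIntegral.integral_same, add_zero]
  refine congrArg (b + ·) (intervalIntegral.integral_congr fun t ht => ?_)
  rw [uIcc_of_le hx.1] at ht
  simp [hfst t ⟨ht.1, ht.2.trans hx.2⟩]

variable {u u' v v' : ℝ → ℂ}

theorem IsSol.intervalIntegrable (hV : IntegrableOn V (Ioo 0 R)) (hu : IsSol R V z u u')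
    {x : ℝ} (hx : x ∈ Icc 0 R) : IntervalIntegrable (fun t => (V t - z) * u t) volume 0 x :=
  IntegrableOn.intervalIntegrable <|
    ((integrableOn_Icc_sub_const hV z).mul_continuousOn
      (fun t ht => (hu.1 t ht).continuousAt.continuousWithinAt) isCompact_Icc).mono_set
        (uIcc_subset_Icc (left_mem_Icc.2 (hx.1.trans hx.2)) hx)

theorem IsSol.add (hV : IntegrableOn V (Ioo 0 R)) (hu : IsSol R V z u u')
    (hv : IsSol R V z v v') : IsSol R V z (u + v) (u' + v') := by
  refine ⟨fun x hx => (hu.1 x hx).add (hv.1 x hx), fun x hx => ?_⟩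
  have hsplit : ∫ t in (0 : ℝ)..x, ((V t - z) * (u + v) t - (0 : ℝ → ℂ) t)
      = (∫ t in (0 : ℝ)..x, ((V t - z) * u t - (0 : ℝ → ℂ) t))
        + ∫ t in (0 : ℝ)..x, ((V t - z) * v t - (0 : ℝ → ℂ) t) := by
    simp only [Pi.add_apply, Pi.zero_apply, sub_zero, mul_add]
    exact intervalIntegral.integral_add (hu.intervalIntegrable hV hx) (hv.intervalIntegrable hV hx)
  rw [hsplit, Pi.add_apply, Pi.add_apply, hu.2 x hx, hv.2 x hx]
  ring

theorem IsSol.const_smul (hu : IsSol R V z u u') (c : ℂ) : IsSol R V z (c • u) (c • u') := by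
  refine ⟨fun x hx => (hu.1 x hx).const_smul c, fun x hx => ?_⟩
  simp only [Pi.smul_apply, Pi.zero_apply, sub_zero, smul_eq_mul, mul_left_comm _ c,
    intervalIntegral.integral_const_mul]
  rw [hu.2 x hx]
  simp [mul_add]

theorem IsSol.sub (hV : IntegrableOn V (Ioo 0 R)) (hu : IsSol R V z u u')
    (hv : IsSol R V z v v') : IsSol R V z (u - v) (u' - v') := by
  simpa [sub_eq_add_neg] using hu.add hV (hv.const_smul (-1))

theorem IsSol.deriv_eq_zero_of_forall_eq_zero (hR : 0 < R) (hu : IsSol R V z u u')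
    (hu0 : ∀ x ∈ Icc 0 R, u x = 0) {x : ℝ} (hx : x ∈ Icc 0 R) : u' x = 0 :=
  (uniqueDiffOn_Icc hR x hx).eq_deriv _ (hu.1 x hx).hasDerivWithinAt
    ((hasDerivWithinAt_const x _ 0).congr_of_mem hu0 hx)

end Solutions

theorem bTrace_add (R : ℝ) (θ0 θR : ℂ) (u u' v v' : ℝ → ℂ) :
    bTrace R θ0 θR (u + v) (u' + v') = bTrace R θ0 θR u u' + bTrace R θ0 θR v v' := by
  ext i; fin_cases i <;> simp [bTrace] <;> ring

theorem bTrace_sub (R : ℝ) (θ0 θR : ℂ) (u u' v v' : ℝ → ℂ) :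
    bTrace R θ0 θR (u - v) (u' - v') = bTrace R θ0 θR u u' - bTrace R θ0 θR v v' := by
  ext i; fin_cases i <;> simp [bTrace] <;> ring

theorem bTrace_smul (R : ℝ) (θ0 θR c : ℂ) (u u' : ℝ → ℂ) :
    bTrace R θ0 θR (c • u) (c • u') = c • bTrace R θ0 θR u u' := by
  ext i; fin_cases i <;> simp [bTrace] <;> ring

section BoundaryData

variable {R : ℝ} {V : ℝ → ℂ} {z θ0 θR θ0' θR' : ℂ} {u u' v v' : ℝ → ℂ}

theorem IsSol.eq_zero_of_bTrace_eq_zero (hR : 0 < R) (hz : ¬ IsEigenvalue R V θ0 θR z)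
    (hu : IsSol R V z u u') (h : bTrace R θ0 θR u u' = 0) {x : ℝ} (hx : x ∈ Icc 0 R) :
    u x = 0 ∧ u' x = 0 := by
  have hu0 : ∀ x ∈ Icc 0 R, u x = 0 := fun x hx => by
    by_contra hne
    exact hz ⟨u, u', hu, h, x, hx, hne⟩
  exact ⟨hu0 x hx, hu.deriv_eq_zero_of_forall_eq_zero hR hu0 hx⟩

theorem bTrace_eq_of_bTrace_eq (hR : 0 < R) (hV : IntegrableOn V (Ioo 0 R))
    (hz : ¬ IsEigenvalue R V θ0 θR z) (hu : IsSol R V z u u') (hv : IsSol R V z v v')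
    (h : bTrace R θ0 θR u u' = bTrace R θ0 θR v v') (θa θb : ℂ) :
    bTrace R θa θb u u' = bTrace R θa θb v v' := by
  have hzero {x : ℝ} (hx : x ∈ Icc 0 R) : (u - v) x = 0 ∧ (u' - v') x = 0 :=
    (hu.sub hV hv).eq_zero_of_bTrace_eq_zero hR hz (by rw [bTrace_sub, h, sub_self]) hx
  obtain ⟨h0, h0'⟩ := hzero ⟨le_rfl, hR.le⟩
  obtain ⟨hR0, hR0'⟩ := hzero ⟨hR.le, le_rfl⟩
  rw [← sub_eq_zero, ← bTrace_sub]
  ext i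
  fin_cases i <;> simp [bTrace, h0, h0', hR0, hR0']

theorem exists_isSol_bTrace_eq (hR : 0 < R) (hV : IntegrableOn V (Ioo 0 R))
    (hz : ¬ IsEigenvalue R V θ0 θR z) (c : Fin 2 → ℂ) :
    ∃ u u', IsSol R V z u u' ∧ bTrace R θ0 θR u u' = c := by
  obtain ⟨u₁, u₁', hu₁, hu₁0, hu₁'0⟩ := exists_isSol (z := z) hR hV 1 0
  obtain ⟨u₂, u₂', hu₂, hu₂0, hu₂'0⟩ := exists_isSol (z := z) hR hV 0 1
  have hsol (p : Fin 2 → ℂ) : IsSol R V z (p 0 • u₁ + p 1 • u₂) (p 0 • u₁' + p 1 • u₂') :=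
    (hu₁.const_smul _).add hV (hu₂.const_smul _)
  set T : (Fin 2 → ℂ) →ₗ[ℂ] Fin 2 → ℂ :=
    Fintype.linearCombination ℂ ![bTrace R θ0 θR u₁ u₁', bTrace R θ0 θR u₂ u₂']
  have hT (p : Fin 2 → ℂ) :
      T p = bTrace R θ0 θR (p 0 • u₁ + p 1 • u₂) (p 0 • u₁' + p 1 • u₂') := by
    simp [T, Fintype.linearCombination_apply, bTrace_add, bTrace_smul]
  have hinj : Function.Injective T := by
    refine (injective_iff_map_eq_zero T).2 fun p hp => ?_
    obtain ⟨h0, h0'⟩ :=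
      (hsol p).eq_zero_of_bTrace_eq_zero hR hz ((hT p).symm.trans hp) ⟨le_rfl, hR.le⟩
    simp only [Pi.add_apply, Pi.smul_apply, smul_eq_mul, hu₁0, hu₂0, hu₁'0, hu₂'0, mul_one,
      mul_zero, add_zero, zero_add] at h0 h0'
    ext i
    fin_cases i
    exacts [h0, h0']
  obtain ⟨p, hp⟩ := LinearMap.injective_iff_surjective.1 hinj c
  exact ⟨_, _, hsol p, (hT p).symm.trans hp⟩

theorem lambdaMap_bTrace (hR : 0 < R) (hV : IntegrableOn V (Ioo 0 R))
    (hz : ¬ IsEigenvalue R V θ0 θR z) (hu : IsSol R V z u u') (θa θb : ℂ) :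
    lambdaMap R V θ0 θR θa θb z (bTrace R θ0 θR u u') = bTrace R θa θb u u' := by
  have hex : ∃ w : (ℝ → ℂ) × (ℝ → ℂ),
      IsSol R V z w.1 w.2 ∧ bTrace R θ0 θR w.1 w.2 = bTrace R θ0 θR u u' := ⟨(u, u'), hu, rfl⟩
  rw [lambdaMap, dif_pos hex]
  exact bTrace_eq_of_bTrace_eq hR hV hz hex.choose_spec.1 hu hex.choose_spec.2 θa θb

theorem isLinearMap_lambdaMap (hR : 0 < R) (hV : IntegrableOn V (Ioo 0 R))
    (hz : ¬ IsEigenvalue R V θ0 θR z) (θa θb : ℂ) :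
    IsLinearMap ℂ (lambdaMap R V θ0 θR θa θb z) := by
  constructor
  · intro c d
    obtain ⟨u, u', hu, rfl⟩ := exists_isSol_bTrace_eq hR hV hz c
    obtain ⟨v, v', hv, rfl⟩ := exists_isSol_bTrace_eq hR hV hz d
    rw [← bTrace_add, lambdaMap_bTrace hR hV hz (hu.add hV hv), lambdaMap_bTrace hR hV hz hu,
      lambdaMap_bTrace hR hV hz hv, bTrace_add]
  · intro a c
    obtain ⟨u, u', hu, rfl⟩ := exists_isSol_bTrace_eq hR hV hz c
    rw [← bTrace_smul, lambdaMap_bTrace hR hV hz (hu.const_smul a), lambdaMap_bTrace hR hV hz hu,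
      bTrace_smul]

theorem lambdaMat_eq_toMatrix' (hR : 0 < R) (hV : IntegrableOn V (Ioo 0 R))
    (hz : ¬ IsEigenvalue R V θ0 θR z) (θa θb : ℂ) :
    lambdaMat R V θ0 θR θa θb z =
      LinearMap.toMatrix' ((isLinearMap_lambdaMap hR hV hz θa θb).mk' _) := by
  ext i j
  rw [LinearMap.toMatrix'_apply]
  rfl

theorem lambdaMap_lambdaMap (hR : 0 < R) (hV : IntegrableOn V (Ioo 0 R))
    (hz : ¬ IsEigenvalue R V θ0 θR z) (hz' : ¬ IsEigenvalue R V θ0' θR' z) (c : Fin 2 → ℂ) :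
    lambdaMap R V θ0' θR' θ0 θR z (lambdaMap R V θ0 θR θ0' θR' z c) = c := by
  obtain ⟨u, u', hu, rfl⟩ := exists_isSol_bTrace_eq hR hV hz c
  rw [lambdaMap_bTrace hR hV hz hu, lambdaMap_bTrace hR hV hz' hu]

theorem lambdaMat_mul_lambdaMat (hR : 0 < R) (hV : IntegrableOn V (Ioo 0 R))
    (hz : ¬ IsEigenvalue R V θ0 θR z) (hz' : ¬ IsEigenvalue R V θ0' θR' z) :
    lambdaMat R V θ0' θR' θ0 θR z * lambdaMat R V θ0 θR θ0' θR' z = 1 := by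
  rw [lambdaMat_eq_toMatrix' hR hV hz', lambdaMat_eq_toMatrix' hR hV hz,
    ← LinearMap.toMatrix'_comp, ← LinearMap.toMatrix'_id]
  exact congrArg _ (LinearMap.ext (lambdaMap_lambdaMap hR hV hz hz'))

end BoundaryData

theorem lambda_invertible_and_inverse_general
    (R : ℝ) (hR : 0 < R) (V : ℝ → ℂ) (hV : IntegrableOn V (Ioo 0 R))
    (θ0 θR θ0' θR' : ℂ)
    (z : ℂ) (hz : ¬ IsEigenvalue R V θ0 θR z) (hz' : ¬ IsEigenvalue R V θ0' θR' z) :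
    IsUnit (lambdaMat R V θ0 θR θ0' θR' z) ∧
    (lambdaMat R V θ0 θR θ0' θR' z)⁻¹ = lambdaMat R V θ0' θR' θ0 θR z := by
  have hright := lambdaMat_mul_lambdaMat hR hV hz' hz
  exact ⟨IsUnit.of_mul_eq_one _ hright, Matrix.inv_eq_right_inv hright⟩

/-- For `θ₀, θ_R, θ₀', θ_R' ∈ S_{2π}` and
`z ∈ ℂ \ (σ(H_{θ₀,θ_R}) ∪ σ(H_{θ₀',θ_R'}))`, the `2 × 2` matrix
`Λ_{θ₀,θ_R}^{θ₀',θ_R'}(z)` is invertible and its inverse is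
`Λ_{θ₀',θ_R'}^{θ₀,θ_R}(z)`. -/
theorem lambda_invertible_and_inverse
    (R : ℝ) (hR : 0 < R) (V : ℝ → ℂ) (hV : IntegrableOn V (Ioo 0 R))
    (θ0 θR θ0' θR' : ℂ)
    (hθ0 : θ0 ∈ S2pi) (hθR : θR ∈ S2pi) (hθ0' : θ0' ∈ S2pi) (hθR' : θR' ∈ S2pi)
    (z : ℂ) (hz : ¬ IsEigenvalue R V θ0 θR z) (hz' : ¬ IsEigenvalue R V θ0' θR' z) :
    IsUnit (lambdaMat R V θ0 θR θ0' θR' z) ∧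
    (lambdaMat R V θ0 θR θ0' θR' z)⁻¹ = lambdaMat R V θ0' θR' θ0 θR z :=
  lambda_invertible_and_inverse_general R hR V hV θ0 θR θ0' θR' z hz hz'
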